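/- The first derivative of (s-1)ζ(s) at s = 1 equals γ, the Euler–Mascheroni constant. -/

import Mathlib

/-- The derivative at `s = 1` of the analytic extension of `(s-1)ζ(s)` (with
value `1` at `s = 1`) equals the Euler–Mascheroni constant `γ`. -/
theorem deriv_sub_one_mul_zeta_at_one :
    deriv (fun s : ℂ => if s = 1 then 1 else (s - 1) * riemannZeta s) 1 =
      (Real.eulerMascheroniConstant : ℂ) := by
  refine (hasDerivAt_iff_tendsto_slope.mpr ?_).deriv
  -- The difference quotient `((s - 1) ζ(s) - 1) / (s - 1)` is `ζ(s) - 1 / (s - 1)`,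
  -- whose limit at `1` is the constant term of the Laurent expansion of `ζ`.
  refine tendsto_riemannZeta_sub_one_div.congr' ?_
  filter_upwards [self_mem_nhdsWithin] with s (hs : s ≠ 1)
  have hs₁ : s - 1 ≠ 0 := sub_ne_zero.mpr hs
  rw [slope_def_field, if_neg hs, if_pos rfl]
  field_simp
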